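/- Let A ∈ ℝ^{n×n} with columns a₁,…,aₙ, let Σ = AᵀA, and let 0 ≤ ρ ≤ max_{1≤i≤n} Σ_{ii}. Then sup_{‖z‖₂≤1} (zᵀΣz − ρ·Card(z)) = max_{‖x‖₂=1} ∑_{i=1}^n ((aᵢᵀx)² − ρ)₊, where β₊ = max{β, 0}. -/

import Mathlib

open Matrix

/-- The largest eigenvalue of a matrix, as the supremum of its (real) eigenvalues. -/
noncomputable def lambdaMax {n : ℕ} (M : Matrix (Fin n) (Fin n) ℝ) : ℝ :=
  sSup {t : ℝ | ∃ v : Fin n → ℝ, v ≠ 0 ∧ M.mulVec v = t • v}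

open Classical in
/-- `card z` is the number of nonzero coefficients of the vector `z`. -/
noncomputable def card {n : ℕ} (z : Fin n → ℝ) : ℕ :=
  (Finset.univ.filter fun i => z i ≠ 0).card

open Classical in
/-- `trPlus M` is the sum of the positive parts of the eigenvalues of a symmetric matrix `M`. -/
noncomputable def trPlus {n : ℕ} (M : Matrix (Fin n) (Fin n) ℝ) : ℝ :=
  if h : M.IsHermitian then ∑ i, max (h.eigenvalues i) 0 else 0

open Classical in
/-- `matSqrt X` is the positive semidefinite square root of a positive semidefinite matrix. -/
noncomputable def matSqrt {n : ℕ} (X : Matrix (Fin n) (Fin n) ℝ) : Matrix (Fin n) (Fin n) ℝ :=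
  if h : X.PosSemidef then
    h.1.eigenvectorUnitary.1 * diagonal (RCLike.ofReal ∘ Real.sqrt ∘ h.1.eigenvalues) *
      (star h.1.eigenvectorUnitary : Matrix (Fin n) (Fin n) ℝ)
  else 0

/-- for `Σ = AᵀA` and `0 ≤ ρ ≤ max_i Σ_ii`, the sparse PCA value equals
`max_{‖x‖=1} ∑_i ((aᵢᵀx)² − ρ)₊` where `aᵢ` are the columns of `A`. -/
theorem sparsePCA_eq_max_sum_pos_parts {n : ℕ}
    (A : Matrix (Fin n) (Fin n) ℝ) (ρ : ℝ) (hρ0 : 0 ≤ ρ)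
    (hρ : ∃ i, ρ ≤ (Aᵀ * A) i i) :
    IsGreatest
      {v : ℝ | ∃ x : Fin n → ℝ, ∑ i, (x i) ^ 2 = 1 ∧
        v = ∑ i, max (((fun j => A j i) ⬝ᵥ x) ^ 2 - ρ) 0}
      (sSup {v : ℝ | ∃ z : Fin n → ℝ, ∑ i, (z i) ^ 2 ≤ 1 ∧
        v = z ⬝ᵥ (Aᵀ * A).mulVec z - ρ * (card z : ℝ)}) := by
  classical
  obtain ⟨i₀, hi₀⟩ := hρ
  set f : (Fin n → ℝ) → ℝ := fun x => ∑ i, max (((fun j => A j i) ⬝ᵥ x) ^ 2 - ρ) 0 with hf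
  set K : Set (Fin n → ℝ) := {x | ∑ i, (x i) ^ 2 = 1} with hKdef
  set T : Set ℝ := {v : ℝ | ∃ z : Fin n → ℝ, ∑ i, (z i) ^ 2 ≤ 1 ∧
        v = z ⬝ᵥ (Aᵀ * A).mulVec z - ρ * (card z : ℝ)} with hT
  -- basic algebraic identities
  have hquad : ∀ z : Fin n → ℝ, z ⬝ᵥ (Aᵀ * A).mulVec z = ∑ j, (A.mulVec z j) ^ 2 := by
    intro z
    rw [← mulVec_mulVec, Matrix.dotProduct_mulVec, vecMul_transpose]
    simp [dotProduct, sq]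
  have hdot : ∀ x z : Fin n → ℝ, x ⬝ᵥ A.mulVec z = ∑ i, ((fun j => A j i) ⬝ᵥ x) * z i := by
    intro x z
    rw [Matrix.dotProduct_mulVec]
    simp [vecMul, dotProduct, mul_comm]
  have hf0 : ∀ x, 0 ≤ f x := fun x =>
    Finset.sum_nonneg fun i _ => le_max_right _ _
  -- compactness and maximizer
  have hK : IsCompact K := by
    apply (isCompact_closedBall (0 : Fin n → ℝ) 1).of_isClosed_subset
    · exact isClosed_eq (by continuity) continuous_const
    · intro x hx
      simp only [Metric.mem_closedBall, dist_zero_right]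
      rw [pi_norm_le_iff_of_nonneg zero_le_one]
      intro i
      rw [Real.norm_eq_abs, ← sq_le_one_iff_abs_le_one]
      calc (x i)^2 ≤ ∑ i, (x i)^2 :=
            Finset.single_le_sum (f := fun j => (x j)^2)
              (fun i _ => sq_nonneg _) (Finset.mem_univ i)
      _ = 1 := hx
  have hcont : Continuous f := by
    apply continuous_finset_sum
    intro i _
    apply Continuous.max _ continuous_const
    apply Continuous.sub _ continuous_const
    apply Continuous.pow
    unfold dotProduct
    exact continuous_finset_sum _ fun j _ => continuous_const.mul (continuous_apply j)
  have hsingle : ∀ (i₁ : Fin n), ∑ i, (Pi.single (M := fun _ => ℝ) i₁ 1 i) ^ 2 = 1 := by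
    intro i₁
    simp [Pi.single_apply]
  have hKne : (Pi.single i₀ (1:ℝ)) ∈ K := hsingle i₀
  obtain ⟨x₀, hx₀K, hmax⟩ := hK.exists_isMaxOn ⟨_, hKne⟩ hcont.continuousOn
  set M := f x₀ with hM
  have hM0 : 0 ≤ M := hf0 x₀
  -- T is nonempty (0 ∈ T via z = 0)
  have hTne : (0:ℝ) ∈ T := by
    refine ⟨0, by simp, ?_⟩
    suffices h : card (0 : Fin n → ℝ) = 0 by simp [h]
    simp [card]
  -- upper bound: every element of T is ≤ M
  have hub : ∀ v ∈ T, v ≤ M := by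
    rintro v ⟨z, hz, rfl⟩
    set w := A.mulVec z with hw
    set c2 := ∑ j, (w j) ^ 2 with hc2
    have hc2nn : 0 ≤ c2 := Finset.sum_nonneg fun j _ => sq_nonneg _
    rcases eq_or_lt_of_le hc2nn with hc2z | hc2pos
    · -- quadratic form is zero
      have : z ⬝ᵥ (Aᵀ * A).mulVec z = 0 := by rw [hquad]; exact hc2z.symm
      rw [this]
      have : (0:ℝ) ≤ ρ * (card z : ℝ) := by positivity
      linarith
    · set c := Real.sqrt c2 with hc
      have hcpos : 0 < c := Real.sqrt_pos.mpr hc2pos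
      have hcsq : c ^ 2 = c2 := Real.sq_sqrt hc2nn
      set x : Fin n → ℝ := c⁻¹ • w with hx
      have hxK : x ∈ K := by
        show ∑ i, (x i) ^ 2 = 1
        have : ∀ i, (x i) ^ 2 = c⁻¹ ^ 2 * (w i) ^ 2 := by
          intro i; simp [hx, mul_pow]
        rw [Finset.sum_congr rfl fun i _ => this i, ← Finset.mul_sum, ← hc2,
          inv_pow, hcsq]
        exact inv_mul_cancel₀ (ne_of_gt hc2pos)
      set b : Fin n → ℝ := fun i => (fun j => A j i) ⬝ᵥ x with hb
      have hbz : ∑ i, b i * z i = c := by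
        have h1 : ∑ i, b i * z i = x ⬝ᵥ w := (hdot x z).symm
        have h2 : x ⬝ᵥ w = c⁻¹ * c2 := by
          simp only [hx, dotProduct, Pi.smul_apply, smul_eq_mul, hc2]
          rw [Finset.mul_sum]
          exact Finset.sum_congr rfl fun i _ => by ring
        rw [h1, h2, ← hcsq, sq]
        field_simp
      set s : Finset (Fin n) := Finset.univ.filter (fun i => z i ≠ 0) with hs
      have hcard : (card z : ℝ) = (s.card : ℝ) := by simp [card, hs]
      have hsum_restrict : ∑ i ∈ s, b i * z i = ∑ i, b i * z i := by
        apply Finset.sum_filter_of_ne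
        intro i _ h hz0
        exact h (by rw [hz0, mul_zero])
      have hCS : c2 ≤ ∑ i ∈ s, (b i) ^ 2 := by
        have h1 : (∑ i ∈ s, b i * z i) ^ 2 ≤ (∑ i ∈ s, (b i)^2) * (∑ i ∈ s, (z i)^2) :=
          Finset.sum_mul_sq_le_sq_mul_sq s b z
        have h2 : ∑ i ∈ s, (z i) ^ 2 ≤ 1 := by
          refine le_trans ?_ hz
          exact Finset.sum_le_sum_of_subset_of_nonneg (Finset.filter_subset _ _)
            (fun i _ _ => sq_nonneg _)
        have h3 : (0:ℝ) ≤ ∑ i ∈ s, (b i)^2 := Finset.sum_nonneg fun i _ => sq_nonneg _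
        calc c2 = (∑ i ∈ s, b i * z i) ^ 2 := by rw [hsum_restrict, hbz, hcsq]
        _ ≤ (∑ i ∈ s, (b i)^2) * (∑ i ∈ s, (z i)^2) := h1
        _ ≤ (∑ i ∈ s, (b i)^2) * 1 := by exact mul_le_mul_of_nonneg_left h2 h3
        _ = ∑ i ∈ s, (b i)^2 := mul_one _
      have hfx : ∑ i ∈ s, ((b i)^2 - ρ) ≤ f x := by
        calc ∑ i ∈ s, ((b i)^2 - ρ) ≤ ∑ i ∈ s, max ((b i)^2 - ρ) 0 :=
              Finset.sum_le_sum fun i _ => le_max_left _ _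
        _ ≤ ∑ i, max ((b i)^2 - ρ) 0 :=
              Finset.sum_le_sum_of_subset_of_nonneg (Finset.filter_subset _ _)
                (fun i _ _ => le_max_right _ _)
        _ = f x := rfl
      have hsplit : ∑ i ∈ s, ((b i)^2 - ρ) = (∑ i ∈ s, (b i)^2) - ρ * (s.card : ℝ) := by
        rw [Finset.sum_sub_distrib, Finset.sum_const, nsmul_eq_mul, mul_comm]
      have : z ⬝ᵥ (Aᵀ * A).mulVec z = c2 := by rw [hquad]
      rw [this, hcard]
      have := hmax hxK
      calc c2 - ρ * (s.card : ℝ) ≤ (∑ i ∈ s, (b i)^2) - ρ * (s.card : ℝ) := by linarith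
      _ = ∑ i ∈ s, ((b i)^2 - ρ) := hsplit.symm
      _ ≤ f x := hfx
      _ ≤ M := hmax hxK
  -- lower bound : M is attained (or exceeded) by some element of T
  have hge : ∃ v ∈ T, M ≤ v := by
    set b : Fin n → ℝ := fun i => (fun j => A j i) ⬝ᵥ x₀ with hb
    set s : Finset (Fin n) := Finset.univ.filter (fun i => ρ < (b i)^2) with hs
    have hMsum : M = ∑ i ∈ s, ((b i)^2 - ρ) := by
      have h1 : M = ∑ i, max ((b i)^2 - ρ) 0 := rfl
      rw [h1, ← Finset.sum_filter_add_sum_filter_not Finset.univ (fun i => ρ < (b i)^2)]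
      have h2 : ∑ i ∈ Finset.univ.filter (fun i => ¬ ρ < (b i)^2), max ((b i)^2 - ρ) 0 = 0 := by
        apply Finset.sum_eq_zero
        intro i hi
        rw [Finset.mem_filter] at hi
        have := not_lt.mp hi.2
        rw [max_eq_right (by linarith)]
      rw [h2, add_zero]
      exact Finset.sum_congr rfl fun i hi => by
        rw [Finset.mem_filter] at hi
        exact max_eq_left (by linarith [hi.2])
    rcases Finset.eq_empty_or_nonempty s with hse | hsne
    · -- M = 0; use the basis vector i₀
      have hMz : M = 0 := by rw [hMsum, hse, Finset.sum_empty]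
      refine ⟨(Aᵀ * A) i₀ i₀ - ρ * 1, ⟨Pi.single i₀ 1, le_of_eq (hsingle i₀), ?_⟩, ?_⟩
      · have hcard1 : card (Pi.single (M := fun _ => ℝ) i₀ 1) = 1 := by
          rw [card]
          have : (Finset.univ.filter fun i => Pi.single (M := fun _ => ℝ) i₀ 1 i ≠ 0) = {i₀} := by
            ext i
            simp [Pi.single_apply]
          rw [this, Finset.card_singleton]
        have hqd : (Pi.single (M := fun _ => ℝ) i₀ 1) ⬝ᵥ (Aᵀ * A).mulVec (Pi.single i₀ 1)
            = (Aᵀ * A) i₀ i₀ := by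
          simp [dotProduct, mulVec, Pi.single_apply]
        rw [hqd, hcard1]
        norm_num
      · rw [hMz]; linarith
    · -- the interesting case
      set c2 := ∑ i ∈ s, (b i)^2 with hc2
      have hc2pos : 0 < c2 := by
        apply Finset.sum_pos _ hsne
        intro i hi
        rw [hs, Finset.mem_filter] at hi
        exact lt_of_le_of_lt hρ0 hi.2
      set c := Real.sqrt c2 with hc
      have hcpos : 0 < c := Real.sqrt_pos.mpr hc2pos
      have hcsq : c ^ 2 = c2 := Real.sq_sqrt hc2pos.le
      set z : Fin n → ℝ := fun i => c⁻¹ * (if i ∈ s then b i else 0) with hz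
      have hzsum : ∑ i, (z i) ^ 2 = 1 := by
        have : ∀ i, (z i)^2 = c⁻¹^2 * (if i ∈ s then (b i)^2 else 0) := by
          intro i
          by_cases h : i ∈ s <;> simp [hz, h, mul_pow]
        rw [Finset.sum_congr rfl fun i _ => this i, ← Finset.mul_sum]
        rw [Finset.sum_ite_mem, Finset.univ_inter, ← hc2, inv_pow, hcsq]
        exact inv_mul_cancel₀ (ne_of_gt hc2pos)
      have hbne : ∀ i ∈ s, b i ≠ 0 := by
        intro i hi h0
        rw [hs, Finset.mem_filter] at hi
        rw [h0] at hi
        simp at hi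
        linarith
      have hzcard : (card z : ℝ) = (s.card : ℝ) := by
        congr 1
        rw [card]
        congr 1
        ext i
        simp only [Finset.mem_filter, Finset.mem_univ, true_and]
        constructor
        · intro h
          by_contra hns
          apply h
          simp [hz, hns]
        · intro h
          simp only [hz, if_pos h]
          exact mul_ne_zero (inv_ne_zero (ne_of_gt hcpos)) (hbne i h)
      have hxAz : x₀ ⬝ᵥ A.mulVec z = c := by
        rw [hdot]
        have : ∀ i, b i * z i = c⁻¹ * (if i ∈ s then (b i)^2 else 0) := by
          intro i
          by_cases h : i ∈ s
          · simp [hz, h, sq]; ring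
          · simp [hz, h]
        rw [Finset.sum_congr rfl fun i _ => this i, ← Finset.mul_sum,
          Finset.sum_ite_mem, Finset.univ_inter, ← hc2, ← hcsq, sq]
        field_simp
      have hquadge : c2 ≤ z ⬝ᵥ (Aᵀ * A).mulVec z := by
        rw [hquad]
        have h1 : (∑ j, x₀ j * A.mulVec z j) ^ 2
            ≤ (∑ j, (x₀ j)^2) * (∑ j, (A.mulVec z j)^2) :=
          Finset.sum_mul_sq_le_sq_mul_sq Finset.univ x₀ (A.mulVec z)
        have hx₀1 : ∑ j, (x₀ j)^2 = 1 := hx₀K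
        have h2 : (∑ j, x₀ j * A.mulVec z j) = c := hxAz
        rw [hx₀1, one_mul, h2, hcsq] at h1
        exact h1
      refine ⟨z ⬝ᵥ (Aᵀ * A).mulVec z - ρ * (card z : ℝ), ⟨z, le_of_eq hzsum, rfl⟩, ?_⟩
      rw [hzcard, hMsum]
      have hsplit : ∑ i ∈ s, ((b i)^2 - ρ) = c2 - ρ * (s.card : ℝ) := by
        rw [Finset.sum_sub_distrib, Finset.sum_const, nsmul_eq_mul, mul_comm, hc2]
      rw [hsplit]
      linarith
  -- conclude
  have hsup : sSup T = M := by
    obtain ⟨v, hvT, hMv⟩ := hge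
    exact le_antisymm (csSup_le ⟨0, hTne⟩ hub) (hMv.trans (le_csSup ⟨M, hub⟩ hvT))
  rw [hsup]
  constructor
  · exact ⟨x₀, hx₀K, rfl⟩
  · rintro v ⟨x, hx, rfl⟩
    exact hmax hx
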